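/- arXiv:1602.05696 — 3 statements merged into one kernel-verified Lean document; each statement's English description precedes it below -/
import Mathlib

section
/- For all real u > 0, the inequality 3(u-1)^2 ≤ (2u+4)·λ_B(u) holds, where λ_B(u) = u·log u − u + 1. -/
/-- The Boltzmann function. -/
noncomputable def lamB (u : ℝ) : ℝ := u * Real.log u - u + 1

/-!
Put `g u = (2u + 4) λ_B(u) - 3 (u - 1)²`, so that `g 1 = 0`. Its derivative is
`g' u = 4 h u` with `h u = (u + 1) log u - 2 (u - 1)`, and `h' u = log u + 1/u - 1 ≥ 0`.
Hence `h` increases through its zero `h 1 = 0`, so `g` decreases on `(0, 1]` and increases on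
`[1, ∞)`, and `g ≥ g 1 = 0`.
-/

open Real Set

theorem Convex.le_of_hasDerivAt_of_mul_sub_nonneg {D : Set ℝ} (hD : Convex ℝ D)
    {f f' : ℝ → ℝ} {c : ℝ} (hf : ∀ x ∈ D, HasDerivAt f (f' x) x)
    (hf' : ∀ x ∈ D, 0 ≤ f' x * (x - c))
    (hc : c ∈ D) {x : ℝ} (hx : x ∈ D) : f c ≤ f x := by
  have hcont : ContinuousOn f D := fun y hy => (hf y hy).continuousAt.continuousWithinAt
  have hderiv (E : Set ℝ) (hE : E ⊆ D) (y : ℝ) (hy : y ∈ interior E) :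
      HasDerivWithinAt f (f' y) (interior E) y :=
    (hf y (hE (interior_subset hy))).hasDerivWithinAt
  rcases le_total c x with hcx | hxc
  · have hmono : MonotoneOn f (D ∩ Ici c) := by
      refine monotoneOn_of_hasDerivWithinAt_nonneg (hD.inter (convex_Ici c))
        (hcont.mono inter_subset_left) (hderiv _ inter_subset_left) fun y hy => ?_
      rw [interior_inter, interior_Ici] at hy
      exact nonneg_of_mul_nonneg_left (hf' y (interior_subset hy.1)) (sub_pos.2 hy.2)
    exact hmono ⟨hc, self_mem_Ici⟩ ⟨hx, hcx⟩ hcx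
  · have hanti : AntitoneOn f (D ∩ Iic c) := by
      refine antitoneOn_of_hasDerivWithinAt_nonpos (hD.inter (convex_Iic c))
        (hcont.mono inter_subset_left) (hderiv _ inter_subset_left) fun y hy => ?_
      rw [interior_inter, interior_Iic] at hy
      exact nonpos_of_mul_nonneg_left (hf' y (interior_subset hy.1)) (sub_neg.2 hy.2)
    exact hanti ⟨hx, hxc⟩ ⟨hc, self_mem_Iic⟩ hxc

theorem hasDerivAt_lamB {u : ℝ} (hu : u ≠ 0) : HasDerivAt lamB (log u) u := by
  have h := ((hasDerivAt_mul_log hu).sub (hasDerivAt_id u)).add_const 1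
  rwa [add_sub_cancel_right] at h

theorem hasDerivAt_add_one_mul_log_sub {u : ℝ} (hu : u ≠ 0) :
    HasDerivAt (fun u => (u + 1) * log u - 2 * (u - 1)) (log u + u⁻¹ - 1) u := by
  have h := (((hasDerivAt_id u).add_const 1).mul (hasDerivAt_log hu)).sub
    (((hasDerivAt_id u).sub_const 1).const_mul 2)
  refine h.congr_deriv ?_
  simp only [id]
  field_simp
  ring

theorem add_one_mul_log_sub_mul_sub_one_nonneg {u : ℝ} (hu : 0 < u) :
    0 ≤ ((u + 1) * log u - 2 * (u - 1)) * (u - 1) := by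
  set h := fun u : ℝ => (u + 1) * log u - 2 * (u - 1)
  have hmono : MonotoneOn h (Ioi 0) := by
    refine monotoneOn_of_hasDerivWithinAt_nonneg (f' := fun x => log x + x⁻¹ - 1)
      (convex_Ioi 0)
      (fun x hx => (hasDerivAt_add_one_mul_log_sub (ne_of_gt hx)).continuousAt.continuousWithinAt)
      (fun x hx => ?_) fun x hx => ?_ <;> rw [interior_Ioi] at hx
    · exact (hasDerivAt_add_one_mul_log_sub (ne_of_gt hx)).hasDerivWithinAt
    · linarith [one_sub_inv_le_log_of_pos hx]
  have h_one : h 1 = 0 := by simp [h]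
  rcases le_total 1 u with h1u | hu1
  · exact mul_nonneg (h_one ▸ hmono (mem_Ioi.2 one_pos) hu h1u) (sub_nonneg.2 h1u)
  · exact mul_nonneg_of_nonpos_of_nonpos (h_one ▸ hmono hu (mem_Ioi.2 one_pos) hu1)
      (sub_nonpos.2 hu1)

theorem hasDerivAt_two_mul_add_four_mul_lamB_sub {u : ℝ} (hu : u ≠ 0) :
    HasDerivAt (fun u => (2 * u + 4) * lamB u - 3 * (u - 1) ^ 2)
      (4 * ((u + 1) * log u - 2 * (u - 1))) u := by
  have h := ((((hasDerivAt_id u).const_mul 2).add_const 4).mul (hasDerivAt_lamB hu)).sub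
    ((((hasDerivAt_id u).sub_const 1).pow 2).const_mul 3)
  refine h.congr_deriv ?_
  simp only [id, lamB]
  ring

/-- For all real `u > 0`, `3 (u-1)^2 ≤ (2u+4) λ_B(u)`. -/
theorem pinsker_elementary (u : ℝ) (hu : 0 < u) :
    3 * (u - 1) ^ 2 ≤ (2 * u + 4) * lamB u := by
  have h := (convex_Ioi 0).le_of_hasDerivAt_of_mul_sub_nonneg
    (fun x hx => hasDerivAt_two_mul_add_four_mul_lamB_sub (ne_of_gt hx))
    (fun x hx => by
      rw [mul_assoc]
      exact mul_nonneg zero_le_four (add_one_mul_log_sub_mul_sub_one_nonneg hx))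
    (mem_Ioi.2 one_pos) hu
  simp only [lamB, log_one] at h ⊢
  linarith
end

section
/- For all y > 0, one has log(y)·(y − 1) ≥ 4·(√y − 1)^2. -/
/-!
Put `s = √y`, so that `log y = 2 log s` and the claim becomes
`(s - 1) * ((s + 1) log s - 2 (s - 1)) ≥ 0`. The function `(s + 1) log s - 2 (s - 1)` vanishes
at `1` and is monotone on `(0, ∞)`, its derivative being `log s + s⁻¹ - 1 ≥ 0`; hence it has
the sign of `s - 1`.
-/

open Real Set

theorem hasDerivAt_add_one_mul_log_sub_s1 {x : ℝ} (hx : x ≠ 0) :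
    HasDerivAt (fun s ↦ (s + 1) * log s - 2 * (s - 1)) (log x + x⁻¹ - 1) x := by
  refine ((((hasDerivAt_id' x).add_const 1).mul (hasDerivAt_log hx)).sub
    (((hasDerivAt_id' x).sub_const 1).const_mul 2)).congr_deriv ?_
  field_simp
  ring

theorem monotoneOn_add_one_mul_log_sub :
    MonotoneOn (fun s ↦ (s + 1) * log s - 2 * (s - 1)) (Ioi 0) := by
  refine monotoneOn_of_hasDerivWithinAt_nonneg (convex_Ioi 0)
    (fun x hx ↦ (hasDerivAt_add_one_mul_log_sub_s1 (ne_of_gt hx)).continuousAt.continuousWithinAt)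
    (fun x hx ↦ (hasDerivAt_add_one_mul_log_sub_s1 (ne_of_gt (interior_subset hx))).hasDerivWithinAt)
    fun x hx ↦ ?_
  rw [interior_Ioi] at hx
  linarith [one_sub_inv_le_log_of_pos hx]

theorem two_mul_sub_one_sq_le_sq_sub_one_mul_log {s : ℝ} (hs : 0 < s) :
    2 * (s - 1) ^ 2 ≤ (s ^ 2 - 1) * log s := by
  have hmono := monotoneOn_add_one_mul_log_sub
  have hsign : 0 ≤ (s - 1) * ((s + 1) * log s - 2 * (s - 1)) := by
    rcases le_total 1 s with h | h
    · have := hmono (mem_Ioi.2 one_pos) (mem_Ioi.2 hs) h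
      simp only [log_one, mul_zero, sub_self] at this
      exact mul_nonneg (by linarith) this
    · have := hmono (mem_Ioi.2 hs) (mem_Ioi.2 one_pos) h
      simp only [log_one, mul_zero, sub_self] at this
      exact mul_nonneg_of_nonpos_of_nonpos (by linarith) this
  linarith

/-- For all `y > 0`, `log y · (y - 1) ≥ 4 (√y - 1)^2`. -/
theorem log_mul_sub_one_ge (y : ℝ) (hy : 0 < y) :
    Real.log y * (y - 1) ≥ 4 * (Real.sqrt y - 1) ^ 2 := by
  obtain ⟨s, hs, rfl⟩ : ∃ s, 0 < s ∧ s ^ 2 = y := ⟨√y, sqrt_pos.2 hy, sq_sqrt hy.le⟩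
  rw [sqrt_sq hs.le, log_pow, Nat.cast_ofNat]
  linarith [two_mul_sub_one_sq_le_sq_sub_one_mul_log hs]
end

section
/- Let n*, p*, n̄, p̄ > 0 satisfy the conservation relation n̄ − n* = p̄ − p*. Then n*·(√(n̄/n*) − 1)² + p*·(√(p̄/p*) − 1)² ≤ C₂ · (√(n̄p̄/(n*p*)) − 1)², where C₂ = p* + (p*)²/n* + 2n*/max{p̄/p*, n̄/n*}. -/
/-! With `a = √(n̄/n*)` and `b = √(p̄/p*)` the conservation law reads `n*(a² - 1) = p*(b² - 1)`,
so `a - 1` and `b - 1` have the same sign. Then `ab - 1 = b(a - 1) + (b - 1)` is a sum of two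
terms of the same sign, so it dominates both `b - 1` and `b(a - 1)` in absolute value. This bounds
the `p*` term directly. For the `n*` term: if `b ≤ a`, the conservation law gives
`n*|a - 1| ≤ p*|b - 1|`; if `a ≤ b`, then `b|a - 1| ≤ |ab - 1|` with `b² = max{a², b²}`. -/

section OrderedRing

variable {R : Type*} [CommRing R] [LinearOrder R] [IsStrictOrderedRing R]

theorem sq_le_sq_add_of_mul_nonneg {x y : R} (h : 0 ≤ x * y) : x ^ 2 ≤ (x + y) ^ 2 := by
  nlinarith [sq_nonneg y]

theorem sq_le_sq_add_of_mul_nonneg' {x y : R} (h : 0 ≤ x * y) : y ^ 2 ≤ (x + y) ^ 2 := by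
  rw [add_comm]
  exact sq_le_sq_add_of_mul_nonneg (by rwa [mul_comm])

variable {a b : R}

theorem sq_sub_one_le_sq_mul_sub_one (hb : 0 ≤ b) (h : 0 ≤ (a - 1) * (b - 1)) :
    (b - 1) ^ 2 ≤ (a * b - 1) ^ 2 := by
  have := sq_le_sq_add_of_mul_nonneg' (x := b * (a - 1)) (y := b - 1)
    (by nlinarith [mul_nonneg hb h])
  linear_combination this

theorem sq_mul_sq_sub_one_le_sq_mul_sub_one (hb : 0 ≤ b) (h : 0 ≤ (a - 1) * (b - 1)) :
    b ^ 2 * (a - 1) ^ 2 ≤ (a * b - 1) ^ 2 := by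
  have := sq_le_sq_add_of_mul_nonneg (x := b * (a - 1)) (y := b - 1)
    (by nlinarith [mul_nonneg hb h])
  linear_combination this

variable {s t : R}

theorem sub_one_mul_sub_one_nonneg_of_mul_sq_sub_one_eq (hs : 0 < s) (ht : 0 < t)
    (ha : 0 ≤ a) (hb : 0 ≤ b) (hcons : s * (a ^ 2 - 1) = t * (b ^ 2 - 1)) :
    0 ≤ (a - 1) * (b - 1) := by
  have hsq : 0 ≤ (a ^ 2 - 1) * (b ^ 2 - 1) := by
    refine nonneg_of_mul_nonneg_right (a := s) ?_ hs
    have : s * ((a ^ 2 - 1) * (b ^ 2 - 1)) = t * (b ^ 2 - 1) ^ 2 := by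
      linear_combination (b ^ 2 - 1) * hcons
    rw [this]
    positivity
  have hpos : 0 < (a + 1) * (b + 1) := by positivity
  refine nonneg_of_mul_nonneg_left (b := (a + 1) * (b + 1)) ?_ hpos
  linear_combination hsq

theorem mul_sq_sub_one_le_of_mul_sq_sub_one_eq (hb : 0 ≤ b) (hba : b ≤ a)
    (hcons : s * (a ^ 2 - 1) = t * (b ^ 2 - 1)) :
    s ^ 2 * (a - 1) ^ 2 ≤ t ^ 2 * (b - 1) ^ 2 := by
  have hsq : (b + 1) ^ 2 ≤ (a + 1) ^ 2 := pow_le_pow_left₀ (by positivity) (by linarith) 2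
  refine le_of_mul_le_mul_right (a := (a + 1) ^ 2) ?_ (pow_pos (by linarith) 2)
  calc s ^ 2 * (a - 1) ^ 2 * (a + 1) ^ 2 = t ^ 2 * (b - 1) ^ 2 * (b + 1) ^ 2 := by
        linear_combination (s * (a ^ 2 - 1) + t * (b ^ 2 - 1)) * hcons
    _ ≤ t ^ 2 * (b - 1) ^ 2 * (a + 1) ^ 2 := by gcongr

end OrderedRing

theorem mul_sq_sub_one_add_mul_sq_sub_one_le {ns ps a b : ℝ} (hns : 0 < ns) (hps : 0 < ps)
    (ha : 0 < a) (hb : 0 < b) (hcons : ns * (a ^ 2 - 1) = ps * (b ^ 2 - 1)) :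
    ns * (a - 1) ^ 2 + ps * (b - 1) ^ 2
      ≤ (ps + ps ^ 2 / ns + 2 * ns / max (b ^ 2) (a ^ 2)) * (a * b - 1) ^ 2 := by
  have hsame := sub_one_mul_sub_one_nonneg_of_mul_sq_sub_one_eq hns hps ha.le hb.le hcons
  have hb_sq := sq_sub_one_le_sq_mul_sub_one hb.le hsame
  have hp : ps * (b - 1) ^ 2 ≤ ps * (a * b - 1) ^ 2 := by gcongr
  have hn : ns * (a - 1) ^ 2 ≤ (ps ^ 2 / ns + 2 * ns / max (b ^ 2) (a ^ 2)) * (a * b - 1) ^ 2 := by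
    rcases le_total b a with hba | hab
    · have key := mul_sq_sub_one_le_of_mul_sq_sub_one_eq hb.le hba hcons
      have hmax : 0 ≤ 2 * ns / max (b ^ 2) (a ^ 2) * (a * b - 1) ^ 2 := by positivity
      calc ns * (a - 1) ^ 2 = ns ^ 2 * (a - 1) ^ 2 / ns := by field_simp
        _ ≤ ps ^ 2 * (b - 1) ^ 2 / ns := by gcongr
        _ ≤ ps ^ 2 / ns * (a * b - 1) ^ 2 := by rw [div_mul_eq_mul_div]; gcongr
        _ ≤ _ := by rw [add_mul]; linarith
    · have key := sq_mul_sq_sub_one_le_sq_mul_sub_one hb.le hsame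
      rw [max_eq_left (pow_le_pow_left₀ ha.le hab 2)]
      calc ns * (a - 1) ^ 2 = ns / b ^ 2 * (b ^ 2 * (a - 1) ^ 2) := by field_simp
        _ ≤ ns / b ^ 2 * (a * b - 1) ^ 2 := by gcongr
        _ ≤ 2 * ns / b ^ 2 * (a * b - 1) ^ 2 := by gcongr; linarith
        _ ≤ _ := by
          rw [add_mul]
          linarith [show 0 ≤ ps ^ 2 / ns * (a * b - 1) ^ 2 by positivity]
  calc ns * (a - 1) ^ 2 + ps * (b - 1) ^ 2
      ≤ (ps ^ 2 / ns + 2 * ns / max (b ^ 2) (a ^ 2)) * (a * b - 1) ^ 2 + ps * (a * b - 1) ^ 2 :=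
        add_le_add hn hp
    _ = _ := by ring

/-- If `n̄ − n* = p̄ − p*` (conservation of `n − p`), then
`n*(√(n̄/n*) − 1)² + p*(√(p̄/p*) − 1)² ≤ C₂ (√(n̄p̄/(n*p*)) − 1)²` with
`C₂ = p* + (p*)²/n* + 2n*/max{p̄/p*, n̄/n*}`. -/
theorem averages_estimate (ns ps nb pb : ℝ)
    (hns : 0 < ns) (hps : 0 < ps) (hnb : 0 < nb) (hpb : 0 < pb)
    (hcons : nb - ns = pb - ps) :
    ns * (Real.sqrt (nb / ns) - 1) ^ 2 + ps * (Real.sqrt (pb / ps) - 1) ^ 2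
      ≤ (ps + ps ^ 2 / ns + 2 * ns / max (pb / ps) (nb / ns))
          * (Real.sqrt (nb * pb / (ns * ps)) - 1) ^ 2 := by
  have hn : 0 ≤ nb / ns := by positivity
  have hp : 0 ≤ pb / ps := by positivity
  have hcons' : ns * (Real.sqrt (nb / ns) ^ 2 - 1) = ps * (Real.sqrt (pb / ps) ^ 2 - 1) := by
    rw [Real.sq_sqrt hn, Real.sq_sqrt hp, mul_sub, mul_sub, mul_div_cancel₀ _ hns.ne',
      mul_div_cancel₀ _ hps.ne']
    linarith
  have := mul_sq_sub_one_add_mul_sq_sub_one_le hns hps (Real.sqrt_pos.2 (by positivity))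
    (Real.sqrt_pos.2 (by positivity)) hcons'
  rwa [Real.sq_sqrt hn, Real.sq_sqrt hp, ← Real.sqrt_mul hn, ← mul_div_mul_comm] at this
end
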